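/- Robustness of the gate-by-gate algorithm to amplitude errors: Let U = U_m ⋯ U_1 be an n-qubit circuit with gates U_t supported on supp(U_t), set A_t := {1,…,n} \setminus supp(U_t), and let ψ_t = U_t ⋯ U_1 |0^n⟩ and P_t(x) = |⟨x|ψ_t⟩|². Suppose φ_0 = |0^n⟩ and for t = 1,…,m−1, φ_t ∈ (ℂ²)^{⊗n} are nonzero vectors with ‖ψ_t − φ_t‖ ≤ ε_t. Define probability distributions R_t(x) = |⟨x|U_t φ_{t−1}⟩|² / ‖φ_{t−1}‖² for t = 1,…,m, and for each t let M̃_t be any stochastic matrix on {0,1}^n satisfying M̃_t(y|x) = [y_{A_t} = x_{A_t}] · R_t(y)/R_t(x_{A_t}) whenever R_t(x_{A_t}) > 0. Let Q = M̃_m ⋯ M̃_1 δ_{0^n} be the output distribution of the modified algorithm. Then ‖Q − P_m‖₁ := Σ_{x ∈ {0,1}^n} |Q(x) − P_m(x)| ≤ 16 Σ_{t=1}^{m−1} ε_t. -/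

import Mathlib

def restrictTo {n : ℕ} (A : Finset (Fin n)) (x : Fin n → Bool) :
    {i : Fin n // i ∈ A} → Bool :=
  fun i => x i.val

noncomputable def l2norm {ι : Type*} [Fintype ι] (v : ι → ℂ) : ℝ :=
  Real.sqrt (∑ i, ‖v i‖ ^ 2)

/-!
Let `χ_t` be the normalisation of `φ_t` and `δ_t = ‖ψ_t - χ_t‖`, so `δ_0 = 0` and
`δ_t ≤ 2 ε_t`. Because `U_{t+1}` acts trivially on `A_{t+1}`, the distribution `|χ_t|²` has
the same marginals on `A_{t+1}` as `R_{t+1} = |U_{t+1} χ_t|²`, and resampling the `supp` bits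
from `R_{t+1}` maps every distribution with these marginals to `R_{t+1}` itself. Together with
`‖|a|² - |b|²‖₁ ≤ ‖a - b‖ (‖a‖ + ‖b‖)` this puts `M̃_{t+1} P_t` within `4 δ_t` of `P_{t+1}`,
and since stochastic matrices contract `ℓ₁` the errors add up: `‖Q - P_m‖₁ ≤ 4 Σ δ_t ≤ 8 Σ ε_t`.
-/

open Matrix NormedSpace

lemma norm_sub_normalize_le {V : Type*} [NormedAddCommGroup V] [NormedSpace ℝ V] {x : V}
    (hx : ‖x‖ = 1) (y : V) : ‖x - normalize y‖ ≤ 2 * ‖x - y‖ := by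
  have hy : ‖y - normalize y‖ ≤ ‖x - y‖ := by
    rcases eq_or_ne y 0 with rfl | hy0
    · simp
    calc ‖y - normalize y‖ = ‖(‖y‖ - 1) • normalize y‖ := by
          rw [sub_smul, norm_smul_normalize, one_smul]
      _ = |‖y‖ - ‖x‖| := by
          rw [norm_smul, Real.norm_eq_abs, hx, norm_normalize_eq_one_iff.mpr hy0, mul_one]
      _ ≤ ‖x - y‖ := by rw [norm_sub_rev x]; exact abs_norm_sub_norm_le y x
  calc ‖x - normalize y‖ ≤ ‖x - y‖ + ‖y - normalize y‖ :=
        norm_sub_le_norm_sub_add_norm_sub _ _ _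
    _ ≤ 2 * ‖x - y‖ := by linarith

section L2

variable {ι : Type*} [Fintype ι]

lemma l2norm_eq_norm_toLp (v : ι → ℂ) : l2norm v = ‖WithLp.toLp 2 v‖ := by
  rw [EuclideanSpace.norm_eq]; rfl

lemma l2norm_nonneg (v : ι → ℂ) : 0 ≤ l2norm v :=
  Real.sqrt_nonneg _

lemma l2norm_sub_comm (a b : ι → ℂ) : l2norm (a - b) = l2norm (b - a) := by
  simp only [l2norm_eq_norm_toLp, WithLp.toLp_sub, norm_sub_rev]

lemma toLp_inv_l2norm_smul (v : ι → ℂ) :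
    WithLp.toLp 2 ((l2norm v : ℂ)⁻¹ • v) = normalize (WithLp.toLp 2 v) := by
  rw [NormedSpace.normalize, l2norm_eq_norm_toLp, WithLp.toLp_smul, ← Complex.ofReal_inv,
    Complex.coe_smul]

lemma l2norm_inv_l2norm_smul {v : ι → ℂ} (hv : v ≠ 0) : l2norm ((l2norm v : ℂ)⁻¹ • v) = 1 := by
  rw [l2norm_eq_norm_toLp, toLp_inv_l2norm_smul, norm_normalize_eq_one_iff]
  exact fun h => hv (by simpa using congrArg WithLp.ofLp h)

lemma l2norm_sub_inv_l2norm_smul_le {ψ : ι → ℂ} (hψ : l2norm ψ = 1) (v : ι → ℂ) :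
    l2norm (ψ - (l2norm v : ℂ)⁻¹ • v) ≤ 2 * l2norm (ψ - v) := by
  rw [l2norm_eq_norm_toLp] at hψ
  simp only [l2norm_eq_norm_toLp (_ - _), WithLp.toLp_sub, toLp_inv_l2norm_smul]
  exact norm_sub_normalize_le hψ _

lemma sum_abs_sq_norm_sub_sq_norm_le (a b : ι → ℂ) :
    ∑ x, |‖a x‖ ^ 2 - ‖b x‖ ^ 2| ≤ l2norm (a - b) * (l2norm a + l2norm b) := by
  calc ∑ x, |‖a x‖ ^ 2 - ‖b x‖ ^ 2|
        ≤ ∑ x, (‖(a - b) x‖ * ‖a x‖ + ‖(a - b) x‖ * ‖b x‖) := by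
        gcongr with x
        rw [sq_sub_sq, abs_mul, abs_of_nonneg (by positivity : 0 ≤ ‖a x‖ + ‖b x‖), ← mul_add,
          mul_comm]
        gcongr
        exact abs_norm_sub_norm_le _ _
    _ ≤ l2norm (a - b) * l2norm a + l2norm (a - b) * l2norm b := by
        rw [Finset.sum_add_distrib]
        gcongr <;> exact Real.sum_mul_le_sqrt_mul_sqrt _ _ _
    _ = l2norm (a - b) * (l2norm a + l2norm b) := by ring

lemma sq_norm_mulVec_inv_smul (U : Matrix ι ι ℂ) (v : ι → ℂ) (r : ℝ) (x : ι) :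
    ‖(U *ᵥ ((r : ℂ)⁻¹ • v)) x‖ ^ 2 = ‖(U *ᵥ v) x‖ ^ 2 / r ^ 2 := by
  rw [mulVec_smul, Pi.smul_apply, smul_eq_mul, norm_mul, norm_inv, Complex.norm_real,
    Real.norm_eq_abs, mul_pow, inv_pow, sq_abs, inv_mul_eq_div]

variable [DecidableEq ι]

lemma l2norm_mulVec_of_mem_unitaryGroup {U : Matrix ι ι ℂ} (hU : U ∈ unitaryGroup ι ℂ)
    (v : ι → ℂ) : l2norm (U *ᵥ v) = l2norm v := by
  rw [l2norm_eq_norm_toLp, l2norm_eq_norm_toLp, ← toEuclideanCLM_toLp]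
  exact ContinuousLinearMap.norm_map_of_mem_unitary (Unitary.map_mem _ hU) _

lemma sum_sq_norm_mulVec_of_mem_unitaryGroup {U : Matrix ι ι ℂ} (hU : U ∈ unitaryGroup ι ℂ)
    (v : ι → ℂ) : ∑ x, ‖(U *ᵥ v) x‖ ^ 2 = ∑ x, ‖v x‖ ^ 2 :=
  (Real.sqrt_inj (by positivity) (by positivity)).mp (l2norm_mulVec_of_mem_unitaryGroup hU v)

end L2

section Marginal

variable {ι κ : Type*} [Fintype ι] [DecidableEq κ]

/-- `marginal (restrictTo A) R x` is the paper's `R(x_A)`. -/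
noncomputable def marginal (c : ι → κ) (f : ι → ℝ) (x : ι) : ℝ :=
  ∑ w, if c w = c x then f w else 0

lemma marginal_congr (c : ι → κ) (f : ι → ℝ) {x y : ι} (h : c x = c y) :
    marginal c f x = marginal c f y := by
  simp only [marginal, h]

lemma le_marginal (c : ι → κ) {f : ι → ℝ} (hf : ∀ x, 0 ≤ f x) (x : ι) :
    f x ≤ marginal c f x := by
  simpa [marginal] using Finset.single_le_sum (f := fun w => if c w = c x then f w else 0)
    (fun w _ => by split_ifs <;> simp [hf w]) (Finset.mem_univ x)

lemma sum_abs_sum_mul_sub_sum_mul_le {M : ι → ι → ℝ} (hM_nonneg : ∀ x y, 0 ≤ M y x)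
    (hM_sum : ∀ x, ∑ y, M y x = 1) (p q : ι → ℝ) :
    ∑ y, |∑ x, M y x * p x - ∑ x, M y x * q x| ≤ ∑ x, |p x - q x| :=
  calc ∑ y, |∑ x, M y x * p x - ∑ x, M y x * q x|
      = ∑ y, |∑ x, M y x * (p x - q x)| := by simp only [mul_sub, Finset.sum_sub_distrib]
    _ ≤ ∑ y, ∑ x, M y x * |p x - q x| := by
        gcongr with y
        refine (Finset.abs_sum_le_sum_abs _ _).trans_eq ?_
        simp only [abs_mul, abs_of_nonneg (hM_nonneg _ y)]
    _ = ∑ x, |p x - q x| := by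
        rw [Finset.sum_comm]
        simp only [← Finset.sum_mul, hM_sum, one_mul]

section Resample

variable {c : ι → κ} {R G : ι → ℝ} {M : ι → ι → ℝ}

/-- The resampling matrix `M` maps every `G` with the marginals of `R` to `R`. -/
lemma sum_mul_eq_of_marginal_eq (hR : ∀ x, 0 ≤ R x) (hG : ∀ x, 0 ≤ G x)
    (hmarg : ∀ x, marginal c G x = marginal c R x)
    (hM : ∀ x y, 0 < marginal c R x →
      M y x = if c y = c x then R y / marginal c R x else 0) (y : ι) :
    ∑ x, M y x * G x = R y := by
  have hterm : ∀ x, M y x * G x = if c x = c y then R y / marginal c R y * G x else 0 := by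
    intro x
    rcases lt_or_ge 0 (marginal c R x) with hx | hx
    · rw [hM x y hx]
      by_cases hc : c x = c y
      · rw [if_pos hc.symm, if_pos hc, marginal_congr c R hc]
      · rw [if_neg (Ne.symm hc), if_neg hc, zero_mul]
    · have hG0 : G x = 0 :=
        le_antisymm ((le_marginal c hG x).trans (hmarg x ▸ hx)) (hG x)
      simp [hG0]
  calc ∑ x, M y x * G x = R y / marginal c R y * marginal c G y := by
        simp only [hterm, marginal, Finset.mul_sum, mul_ite, mul_zero]
    _ = R y := by
        rw [hmarg, div_mul_cancel_of_imp]
        exact fun h => le_antisymm (h ▸ le_marginal c hR y) (hR y)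

lemma sum_abs_resample_sub_le (hR : ∀ x, 0 ≤ R x) (hG : ∀ x, 0 ≤ G x)
    (hmarg : ∀ x, marginal c G x = marginal c R x)
    (hM_nonneg : ∀ x y, 0 ≤ M y x) (hM_sum : ∀ x, ∑ y, M y x = 1)
    (hM : ∀ x y, 0 < marginal c R x →
      M y x = if c y = c x then R y / marginal c R x else 0) (q P P' : ι → ℝ) :
    ∑ y, |∑ x, M y x * q x - P' y|
      ≤ ∑ x, |q x - P x| + ∑ x, |P x - G x| + ∑ x, |R x - P' x| :=
  calc ∑ y, |∑ x, M y x * q x - P' y|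
      ≤ ∑ y, (|∑ x, M y x * q x - ∑ x, M y x * G x| + |R y - P' y|) := by
        gcongr with y
        rw [sum_mul_eq_of_marginal_eq hR hG hmarg hM y]
        exact abs_sub_le _ _ _
    _ ≤ ∑ x, |q x - G x| + ∑ x, |R x - P' x| := by
        rw [Finset.sum_add_distrib]
        exact add_le_add_left (sum_abs_sum_mul_sub_sum_mul_le hM_nonneg hM_sum q G) _
    _ ≤ ∑ x, |q x - P x| + ∑ x, |P x - G x| + ∑ x, |R x - P' x| := by
        gcongr
        rw [← Finset.sum_add_distrib]
        exact Finset.sum_le_sum fun x _ => abs_sub_le _ _ _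

end Resample

end Marginal

section Gate

variable {n : ℕ} (S : Finset (Fin n)) (x : Fin n → Bool)

def mergeOn (s : {i : Fin n // i ∈ S} → Bool) : Fin n → Bool :=
  fun i => if h : i ∈ S then s ⟨i, h⟩ else x i

lemma restrictTo_mergeOn (s : {i : Fin n // i ∈ S} → Bool) :
    restrictTo S (mergeOn S x s) = s := by
  funext i
  simp [restrictTo, mergeOn, i.2]

lemma restrictTo_compl_mergeOn (s : {i : Fin n // i ∈ S} → Bool) :
    restrictTo Sᶜ (mergeOn S x s) = restrictTo Sᶜ x := by
  funext i
  simp [restrictTo, mergeOn, Finset.mem_compl.mp i.2]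

lemma mergeOn_restrictTo {w : Fin n → Bool} (hw : restrictTo Sᶜ w = restrictTo Sᶜ x) :
    mergeOn S x (restrictTo S w) = w := by
  funext i
  by_cases h : i ∈ S
  · simp [mergeOn, h, restrictTo]
  · have := congrFun hw ⟨i, Finset.mem_compl.mpr h⟩
    simp only [restrictTo] at this
    simp [mergeOn, h, this]

lemma sum_fiber_eq_sum_mergeOn {A : Type*} [AddCommMonoid A] (f : (Fin n → Bool) → A) :
    ∑ w, (if restrictTo Sᶜ w = restrictTo Sᶜ x then f w else 0) = ∑ s, f (mergeOn S x s) := by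
  rw [← Finset.sum_filter]
  refine Finset.sum_nbij' (restrictTo S) (mergeOn S x) (by simp) ?_ ?_
    (by simp [restrictTo_mergeOn]) ?_
  · simp [restrictTo_compl_mergeOn]
  · intro w hw
    exact mergeOn_restrictTo S x (Finset.mem_filter.mp hw).2
  · intro w hw
    rw [mergeOn_restrictTo S x (Finset.mem_filter.mp hw).2]

variable {S}

lemma mulVec_mergeOn {U : Matrix (Fin n → Bool) (Fin n → Bool) ℂ}
    {V : Matrix ({i : Fin n // i ∈ S} → Bool) ({i : Fin n // i ∈ S} → Bool) ℂ}
    (hUV : ∀ x y, U x y = if restrictTo Sᶜ x = restrictTo Sᶜ y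
      then V (restrictTo S x) (restrictTo S y) else 0)
    (v : (Fin n → Bool) → ℂ) (s : {i : Fin n // i ∈ S} → Bool) :
    (U *ᵥ v) (mergeOn S x s) = (V *ᵥ fun s' => v (mergeOn S x s')) s := by
  simp only [mulVec, dotProduct, hUV, restrictTo_compl_mergeOn, restrictTo_mergeOn, ite_mul,
    zero_mul, eq_comm (a := restrictTo Sᶜ x)]
  rw [sum_fiber_eq_sum_mergeOn S x (fun y => V s (restrictTo S y) * v y)]
  simp only [restrictTo_mergeOn]

lemma marginal_sq_norm_mulVec {U : Matrix (Fin n → Bool) (Fin n → Bool) ℂ}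
    {V : Matrix ({i : Fin n // i ∈ S} → Bool) ({i : Fin n // i ∈ S} → Bool) ℂ}
    (hV : V ∈ unitaryGroup ({i : Fin n // i ∈ S} → Bool) ℂ)
    (hUV : ∀ x y, U x y = if restrictTo Sᶜ x = restrictTo Sᶜ y
      then V (restrictTo S x) (restrictTo S y) else 0) (v : (Fin n → Bool) → ℂ) :
    marginal (restrictTo Sᶜ) (fun w => ‖(U *ᵥ v) w‖ ^ 2) x
      = marginal (restrictTo Sᶜ) (fun w => ‖v w‖ ^ 2) x := by
  simp only [marginal, sum_fiber_eq_sum_mergeOn S x (fun w => ‖_‖ ^ 2),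
    mulVec_mergeOn x hUV]
  exact sum_sq_norm_mulVec_of_mem_unitaryGroup hV _

end Gate

section Step

variable {n : ℕ} {S : Finset (Fin n)}

lemma sum_abs_resample_sub_sq_norm_mulVec_le {U : Matrix (Fin n → Bool) (Fin n → Bool) ℂ}
    {V : Matrix ({i : Fin n // i ∈ S} → Bool) ({i : Fin n // i ∈ S} → Bool) ℂ}
    (hU : U ∈ unitaryGroup (Fin n → Bool) ℂ)
    (hV : V ∈ unitaryGroup ({i : Fin n // i ∈ S} → Bool) ℂ)
    (hUV : ∀ x y, U x y = if restrictTo Sᶜ x = restrictTo Sᶜ y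
      then V (restrictTo S x) (restrictTo S y) else 0)
    {ψ χ : (Fin n → Bool) → ℂ} (hψ : l2norm ψ = 1) (hχ : l2norm χ = 1)
    {R : (Fin n → Bool) → ℝ} (hR : ∀ x, R x = ‖(U *ᵥ χ) x‖ ^ 2)
    {M : (Fin n → Bool) → (Fin n → Bool) → ℝ} (hM_nonneg : ∀ x y, 0 ≤ M y x)
    (hM_sum : ∀ x, ∑ y, M y x = 1)
    (hM : ∀ x y, 0 < marginal (restrictTo Sᶜ) R x →
      M y x = if restrictTo Sᶜ y = restrictTo Sᶜ x
        then R y / marginal (restrictTo Sᶜ) R x else 0)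
    (q : (Fin n → Bool) → ℝ) :
    ∑ y, |∑ x, M y x * q x - ‖(U *ᵥ ψ) y‖ ^ 2|
      ≤ ∑ x, |q x - ‖ψ x‖ ^ 2| + 4 * l2norm (ψ - χ) := by
  have hR' : R = fun x => ‖(U *ᵥ χ) x‖ ^ 2 := funext hR
  have hmarg : ∀ x, marginal (restrictTo Sᶜ) (fun w => ‖χ w‖ ^ 2) x
      = marginal (restrictTo Sᶜ) R x := fun x => by
    rw [hR', marginal_sq_norm_mulVec x hV hUV χ]
  have hstate : ∑ x, |‖ψ x‖ ^ 2 - ‖χ x‖ ^ 2| ≤ 2 * l2norm (ψ - χ) := by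
    have := sum_abs_sq_norm_sub_sq_norm_le ψ χ
    rw [hψ, hχ] at this
    linarith
  have hout : ∑ x, |R x - ‖(U *ᵥ ψ) x‖ ^ 2| ≤ 2 * l2norm (ψ - χ) := by
    have := sum_abs_sq_norm_sub_sq_norm_le (U *ᵥ χ) (U *ᵥ ψ)
    rw [← mulVec_sub, l2norm_mulVec_of_mem_unitaryGroup hU, l2norm_mulVec_of_mem_unitaryGroup hU,
      l2norm_mulVec_of_mem_unitaryGroup hU, hψ, hχ, l2norm_sub_comm] at this
    simp only [hR]
    linarith
  have := sum_abs_resample_sub_le (fun x => by rw [hR x]; positivity) (fun x => by positivity)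
    hmarg hM_nonneg hM_sum hM q (fun x => ‖ψ x‖ ^ 2) (fun y => ‖(U *ᵥ ψ) y‖ ^ 2)
  linarith

end Step

lemma le_add_sum_range_of_le_add {d e : ℕ → ℝ} {m : ℕ} (h : ∀ k < m, d (k + 1) ≤ d k + e k) :
    d m ≤ d 0 + ∑ k ∈ Finset.range m, e k := by
  have hsum : ∑ k ∈ Finset.range m, (d (k + 1) - d k) ≤ ∑ k ∈ Finset.range m, e k :=
    Finset.sum_le_sum fun k hk => by linarith [h k (Finset.mem_range.mp hk)]
  rw [Finset.sum_range_sub] at hsum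
  linarith

theorem stmt_3_general (n m : ℕ)
    (U : Fin m → Matrix (Fin n → Bool) (Fin n → Bool) ℂ)
    (supp : Fin m → Finset (Fin n))
    (hU : ∀ t, U t ∈ Matrix.unitaryGroup (Fin n → Bool) ℂ)
    (hsupp : ∀ t : Fin m,
      ∃ V ∈ Matrix.unitaryGroup ({i : Fin n // i ∈ supp t} → Bool) ℂ,
        ∀ x y : Fin n → Bool,
          U t x y = if restrictTo (supp t)ᶜ x = restrictTo (supp t)ᶜ y
            then V (restrictTo (supp t) x) (restrictTo (supp t) y) else 0)
    (ψ φ : ℕ → (Fin n → Bool) → ℂ) (ε : ℕ → ℝ)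
    (hψ0 : ψ 0 = fun x => if x = (fun _ => false) then 1 else 0)
    (hψ : ∀ t : Fin m, ψ (t + 1) = (U t).mulVec (ψ t))
    (hφ0 : φ 0 = fun x => if x = (fun _ => false) then 1 else 0)
    (hφne : ∀ t : ℕ, 1 ≤ t → t ≤ m - 1 → φ t ≠ 0)
    (hclose : ∀ t : ℕ, 1 ≤ t → t ≤ m - 1 → l2norm (ψ t - φ t) ≤ ε t)
    (R : Fin m → (Fin n → Bool) → ℝ)
    (hR : ∀ t : Fin m, ∀ x : Fin n → Bool,
      R t x = ‖(U t).mulVec (φ t) x‖ ^ 2 / (l2norm (φ t)) ^ 2)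
    (M : Fin m → (Fin n → Bool) → (Fin n → Bool) → ℝ)
    (hMnn : ∀ t x y, 0 ≤ M t y x)
    (hMsum : ∀ t x, ∑ y, M t y x = 1)
    (hM : ∀ t : Fin m, ∀ x y : Fin n → Bool,
      0 < (∑ w : Fin n → Bool,
          if restrictTo (supp t)ᶜ w = restrictTo (supp t)ᶜ x then R t w else 0) →
      M t y x = if restrictTo (supp t)ᶜ y = restrictTo (supp t)ᶜ x
        then R t y /
          (∑ w : Fin n → Bool,
            if restrictTo (supp t)ᶜ w = restrictTo (supp t)ᶜ x then R t w else 0)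
        else 0)
    (Q : ℕ → (Fin n → Bool) → ℝ)
    (hQ0 : Q 0 = fun x => if x = (fun _ => false) then 1 else 0)
    (hQ : ∀ t : Fin m, Q (t + 1) = fun y => ∑ x, M t y x * Q t x) :
    ∑ x : Fin n → Bool, |Q m x - ‖ψ m x‖ ^ 2|
      ≤ 16 * ∑ t ∈ Finset.Icc 1 (m - 1), ε t := by
  set χ : ℕ → (Fin n → Bool) → ℂ := fun t => (l2norm (φ t) : ℂ)⁻¹ • φ t with hχ
  have hψ_norm : ∀ k ≤ m, l2norm (ψ k) = 1 := by
    intro k hk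
    induction k with
    | zero => simp [hψ0, l2norm, apply_ite]
    | succ k ih =>
      rw [show ψ (k + 1) = _ from hψ ⟨k, hk⟩, l2norm_mulVec_of_mem_unitaryGroup (hU _)]
      exact ih (by omega)
  have hφ_ne : ∀ t < m, φ t ≠ 0 := by
    intro t ht
    rcases Nat.eq_zero_or_pos t with rfl | ht1
    · rw [hφ0]
      intro h
      simpa using congrFun h (fun _ => false)
    · exact hφne t ht1 (by omega)
  have hχ0 : χ 0 = ψ 0 := by
    simp only [hχ, hφ0.trans hψ0.symm, hψ_norm 0 (Nat.zero_le m), Complex.ofReal_one, inv_one,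
      one_smul]
  have hstep : ∀ k < m, ∑ x, |Q (k + 1) x - ‖ψ (k + 1) x‖ ^ 2|
      ≤ ∑ x, |Q k x - ‖ψ k x‖ ^ 2| + 4 * l2norm (ψ k - χ k) := by
    intro k hk
    obtain ⟨V, hV, hUV⟩ := hsupp ⟨k, hk⟩
    rw [show Q (k + 1) = _ from hQ ⟨k, hk⟩, show ψ (k + 1) = _ from hψ ⟨k, hk⟩]
    exact sum_abs_resample_sub_sq_norm_mulVec_le (hU _) hV hUV (hψ_norm k hk.le)
      (l2norm_inv_l2norm_smul (hφ_ne k hk))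
      (fun x => by rw [hR, sq_norm_mulVec_inv_smul]) (hMnn _) (hMsum _) (hM _) (Q k)
  have hstart : ∑ x, |Q 0 x - ‖ψ 0 x‖ ^ 2| = 0 := by
    rw [hQ0, hψ0]
    exact Finset.sum_eq_zero fun x _ => by dsimp only; split_ifs <;> simp
  calc ∑ x, |Q m x - ‖ψ m x‖ ^ 2|
      ≤ ∑ k ∈ Finset.range m, 4 * l2norm (ψ k - χ k) := by
        simpa [hstart] using
          le_add_sum_range_of_le_add (d := fun k => ∑ x, |Q k x - ‖ψ k x‖ ^ 2|) hstep
    _ = ∑ t ∈ Finset.Icc 1 (m - 1), 4 * l2norm (ψ t - χ t) := by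
        rw [← Finset.sum_erase (Finset.range m) (a := 0) (by simp [hχ0, l2norm])]
        congr 1
        ext t
        simp only [Finset.mem_erase, Finset.mem_range, Finset.mem_Icc]
        omega
    _ ≤ ∑ t ∈ Finset.Icc 1 (m - 1), 16 * ε t := by
        refine Finset.sum_le_sum fun t ht => ?_
        obtain ⟨ht1, htm⟩ := Finset.mem_Icc.mp ht
        have := l2norm_sub_inv_l2norm_smul_le (hψ_norm t (by omega)) (φ t)
        linarith [hclose t ht1 htm, l2norm_nonneg (ψ t - χ t)]
    _ = 16 * ∑ t ∈ Finset.Icc 1 (m - 1), ε t := (Finset.mul_sum _ _ _).symm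

/-- Robustness of the gate-by-gate algorithm to amplitude errors.
With `ψ t` the exact intermediate states and `φ t` nonzero approximations
satisfying `‖ψ t − φ t‖ ≤ ε t` for `t = 1, …, m−1` (and `φ 0 = |0^n⟩`),
let `R t` be the distribution of measuring `U_t φ_{t-1}` (normalized), and let
`M t` be stochastic matrices implementing the conditional resampling step of
the gate-by-gate algorithm with `R t` in place of the exact distribution.
Then the output distribution `Q m` of the modified algorithm satisfies
`‖Q m − P_m‖₁ ≤ 16 Σ_{t=1}^{m-1} ε t`. -/
theorem stmt_3 (n m : ℕ) (hm : 1 ≤ m)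
    (U : Fin m → Matrix (Fin n → Bool) (Fin n → Bool) ℂ)
    (supp : Fin m → Finset (Fin n))
    (hU : ∀ t, U t ∈ Matrix.unitaryGroup (Fin n → Bool) ℂ)
    (hsupp : ∀ t : Fin m,
      ∃ V ∈ Matrix.unitaryGroup ({i : Fin n // i ∈ supp t} → Bool) ℂ,
        ∀ x y : Fin n → Bool,
          U t x y = if restrictTo (supp t)ᶜ x = restrictTo (supp t)ᶜ y
            then V (restrictTo (supp t) x) (restrictTo (supp t) y) else 0)
    (ψ φ : ℕ → (Fin n → Bool) → ℂ) (ε : ℕ → ℝ)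
    (hψ0 : ψ 0 = fun x => if x = (fun _ => false) then 1 else 0)
    (hψ : ∀ t : Fin m, ψ (t + 1) = (U t).mulVec (ψ t))
    (hφ0 : φ 0 = fun x => if x = (fun _ => false) then 1 else 0)
    (hφne : ∀ t : ℕ, 1 ≤ t → t ≤ m - 1 → φ t ≠ 0)
    (hclose : ∀ t : ℕ, 1 ≤ t → t ≤ m - 1 → l2norm (ψ t - φ t) ≤ ε t)
    (R : Fin m → (Fin n → Bool) → ℝ)
    (hR : ∀ t : Fin m, ∀ x : Fin n → Bool,
      R t x = ‖(U t).mulVec (φ t) x‖ ^ 2 / (l2norm (φ t)) ^ 2)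
    (M : Fin m → (Fin n → Bool) → (Fin n → Bool) → ℝ)
    (hMnn : ∀ t x y, 0 ≤ M t y x)
    (hMsum : ∀ t x, ∑ y, M t y x = 1)
    (hM : ∀ t : Fin m, ∀ x y : Fin n → Bool,
      0 < (∑ w : Fin n → Bool,
          if restrictTo (supp t)ᶜ w = restrictTo (supp t)ᶜ x then R t w else 0) →
      M t y x = if restrictTo (supp t)ᶜ y = restrictTo (supp t)ᶜ x
        then R t y /
          (∑ w : Fin n → Bool,
            if restrictTo (supp t)ᶜ w = restrictTo (supp t)ᶜ x then R t w else 0)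
        else 0)
    (Q : ℕ → (Fin n → Bool) → ℝ)
    (hQ0 : Q 0 = fun x => if x = (fun _ => false) then 1 else 0)
    (hQ : ∀ t : Fin m, Q (t + 1) = fun y => ∑ x, M t y x * Q t x) :
    ∑ x : Fin n → Bool, |Q m x - ‖ψ m x‖ ^ 2|
      ≤ 16 * ∑ t ∈ Finset.Icc 1 (m - 1), ε t :=
  stmt_3_general n m U supp hU hsupp ψ φ ε hψ0 hψ hφ0 hφne hclose R hR M hMnn hMsum hM Q hQ0 hQ
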